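/- Let S be a nonempty finite set of positive integers and n ≥ 1. The quadratic trace function Q_n(x) = Tr(∑_{i∈S} x^(2^i+1)) vanishes identically on GaloisField 2 n if and only if the rotation symmetric Boolean function B : (Fin n → ZMod 2) → ZMod 2 defined by B(x) = ∑_{i∈S} ∑_{j=0}^{n−1} x_j · x_{(j+i) mod n} vanishes identically on (Fin n → ZMod 2). -/

import Mathlib

/-- The quadratic trace function `Q_n(x) = Tr(∑_{i∈S} x^(2^i+1))` on `GaloisField 2 n`. -/
noncomputable def Qtr (S : Finset ℕ) (n : ℕ) (x : GaloisField 2 n) : ZMod 2 :=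
  Algebra.trace (ZMod 2) (GaloisField 2 n) (∑ i ∈ S, x ^ (2 ^ i + 1))

/-- `g` is balanced if it takes the value `1` exactly `2^(n-1)` times. -/
noncomputable def BalancedG (n : ℕ) (g : GaloisField 2 n → ZMod 2) : Prop :=
  Nat.card {x : GaloisField 2 n // g x = 1} = 2 ^ (n - 1)

/-- The associated rotation symmetric Boolean function
`B(x) = ∑_{i∈S} ∑_{j=0}^{n-1} x_j * x_{(j+i) mod n}`. -/
def rsB (S : Finset ℕ) (n : ℕ) (x : Fin n → ZMod 2) : ZMod 2 :=
  ∑ i ∈ S, ∑ j : Fin n, x j * x ⟨(j.val + i) % n, Nat.mod_lt _ j.pos⟩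

/-!
Both functions are values of the rotation symmetric form `F(y) = ∑_{i ∈ S} ∑_j y_j y_{j+i}`:
`B` at `y = x`, and `Q_n`, pushed into `GaloisField 2 n`, at the Frobenius conjugates
`y_j = x ^ 2 ^ j`. Grouping `S` by residues, `F(y) = ∑_{j,k} c_{k-j} y_j y_k`, where `c_d`
counts the `i ∈ S` with `i ≡ d (mod n)`. In characteristic `2` this vanishes as soon as `c_0`
and every `c_d + c_{-d}` are even, the coefficient matrix then being alternating. Conversely,
these parities are `B(e_0)` and `B(e_0 + e_d)`; for `Q_n` they are the coefficients of `X` and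
`X ^ (2 ^ d + 1)` in a polynomial of degree `< 2 ^ n` representing `Q_n`, which must vanish.
-/

open Finset Polynomial

section QuadraticSum

variable {ι R : Type*} [Fintype ι] [CommSemiring R]

theorem sum_sum_mul_mul_eq_zero_of_alternating (A : ι → ι → R) (hdiag : ∀ i, A i i = 0)
    (halt : ∀ i j, A i j + A j i = 0) (y : ι → R) : ∑ i, ∑ j, A i j * y i * y j = 0 := by
  rw [← Fintype.sum_prod_type']
  refine sum_ninvolution Prod.swap (fun p => ?_) (fun p hp hswap => hp ?_) (fun _ => mem_univ _)
    Prod.swap_swap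
  · calc A p.1 p.2 * y p.1 * y p.2 + A p.2 p.1 * y p.2 * y p.1
        = (A p.1 p.2 + A p.2 p.1) * y p.1 * y p.2 := by ring
      _ = 0 := by rw [halt, zero_mul, zero_mul]
  · rw [show p.2 = p.1 from congrArg Prod.fst hswap, hdiag, zero_mul, zero_mul]

variable [DecidableEq ι]

theorem sum_sum_mul_single_mul_single (A : ι → ι → R) (a : ι) :
    ∑ i, ∑ j, A i j * (Pi.single a 1 : ι → R) i * (Pi.single a 1 : ι → R) j = A a a := by
  simp [Pi.single_apply]

theorem sum_sum_mul_single_add_single (A : ι → ι → R) (a b : ι) :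
    ∑ i, ∑ j, A i j * (Pi.single a 1 + Pi.single b 1 : ι → R) i
      * (Pi.single a 1 + Pi.single b 1 : ι → R) j = A a a + A a b + A b a + A b b := by
  simp only [Pi.add_apply, Pi.single_apply, mul_add, mul_ite, mul_one, mul_zero, sum_add_distrib,
    sum_ite_eq', mem_univ, ↓reduceIte]
  ring

end QuadraticSum

theorem Nat.two_pow_ne_two_pow_add_one {a d : ℕ} (hd : d ≠ 0) : 2 ^ a ≠ 2 ^ d + 1 := by
  obtain ⟨d, rfl⟩ := Nat.exists_eq_add_one_of_ne_zero hd
  cases a with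
  | zero => simp
  | succ a => rw [pow_succ, pow_succ]; omega

theorem Nat.two_pow_add_two_pow_eq_two_pow_add_one_iff {a b d : ℕ} (hd : d ≠ 0) :
    2 ^ a + 2 ^ b = 2 ^ d + 1 ↔ (a = 0 ∧ b = d) ∨ (a = d ∧ b = 0) := by
  obtain ⟨d, rfl⟩ := Nat.exists_eq_add_one_of_ne_zero hd
  have hinj := Nat.pow_right_injective (le_refl 2)
  cases a with
  | zero => cases b with
    | zero => simp
    | succ b => simp [add_comm 1, hinj.eq_iff]
  | succ a => cases b with
    | zero => simp [hinj.eq_iff]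
    | succ b => simp only [pow_succ]; omega

theorem GaloisField.pow_prime_pow_eq_pow_prime_pow_mod (p : ℕ) [Fact p.Prime] {n : ℕ}
    (hn : n ≠ 0) (x : GaloisField p n) (m : ℕ) : x ^ p ^ m = x ^ p ^ (m % n) := by
  have := Fintype.ofFinite (GaloisField p n)
  have hcard : Fintype.card (GaloisField p n) = p ^ n := by
    rw [Fintype.card_eq_nat_card, GaloisField.card p n hn]
  conv_lhs => rw [← Nat.div_add_mod m n, pow_add, pow_mul, pow_mul, ← hcard,
    FiniteField.pow_card_pow]

def residueCount (S : Finset ℕ) (n : ℕ) [NeZero n] (d : Fin n) : ℕ :=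
  #{i ∈ S | Fin.ofNat n i = d}

def ResidueCountsPaired (S : Finset ℕ) (n : ℕ) [NeZero n] : Prop :=
  Even (residueCount S n 0) ∧ ∀ d, Even (residueCount S n d + residueCount S n (-d))

def rotationSymmetricForm {R : Type*} [CommSemiring R] (S : Finset ℕ) (n : ℕ) [NeZero n]
    (y : Fin n → R) : R :=
  ∑ i ∈ S, ∑ j, y j * y (j + Fin.ofNat n i)

variable {R : Type*} {n : ℕ} [NeZero n]

theorem rsB_eq_rotationSymmetricForm (S : Finset ℕ) (x : Fin n → ZMod 2) :
    rsB S n x = rotationSymmetricForm S n x := by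
  refine sum_congr rfl fun i _ => sum_congr rfl fun j _ => congrArg (x j * x ·) (Fin.ext ?_)
  simp [Fin.val_add]

theorem rotationSymmetricForm_eq_sum_residueCount [CommSemiring R] (S : Finset ℕ)
    (y : Fin n → R) :
    rotationSymmetricForm S n y = ∑ j, ∑ k, (residueCount S n (k - j) : R) * y j * y k := by
  rw [rotationSymmetricForm, sum_comm]
  refine sum_congr rfl fun j _ => ?_
  rw [← sum_fiberwise' S (fun i : ℕ => j + Fin.ofNat n i) (fun k => y j * y k)]
  refine sum_congr rfl fun k _ => ?_
  rw [sum_const, nsmul_eq_mul, residueCount, mul_assoc]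
  simp_rw [eq_sub_iff_add_eq']

theorem rotationSymmetricForm_eq_zero [CommRing R] [CharP R 2] {S : Finset ℕ}
    (hS : ResidueCountsPaired S n) (y : Fin n → R) : rotationSymmetricForm S n y = 0 := by
  have hcast {c : ℕ} (hc : Even c) : (c : R) = 0 :=
    (CharP.cast_eq_zero_iff R 2 c).mpr hc.two_dvd
  rw [rotationSymmetricForm_eq_sum_residueCount]
  refine sum_sum_mul_mul_eq_zero_of_alternating _ (fun j => ?_) (fun j k => ?_) y
  · rw [sub_self]; exact hcast hS.1
  · rw [← Nat.cast_add, ← neg_sub k j]; exact hcast (hS.2 _)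

theorem residueCountsPaired_of_forall_rotationSymmetricForm_eq_zero {S : Finset ℕ}
    (h : ∀ x : Fin n → ZMod 2, rotationSymmetricForm S n x = 0) : ResidueCountsPaired S n := by
  have h0 := h (Pi.single 0 1)
  rw [rotationSymmetricForm_eq_sum_residueCount, sum_sum_mul_single_mul_single, sub_self] at h0
  refine ⟨ZMod.natCast_eq_zero_iff_even.mp h0, fun d => ZMod.natCast_eq_zero_iff_even.mp ?_⟩
  have hd := h (Pi.single 0 1 + Pi.single d 1)
  rw [rotationSymmetricForm_eq_sum_residueCount, sum_sum_mul_single_add_single] at hd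
  simp only [sub_self, sub_zero, zero_sub] at hd
  push_cast
  linear_combination hd - 2 * h0

theorem rsB_eq_zero_iff (S : Finset ℕ) :
    (∀ x, rsB S n x = 0) ↔ ResidueCountsPaired S n := by
  simp only [rsB_eq_rotationSymmetricForm]
  exact ⟨residueCountsPaired_of_forall_rotationSymmetricForm_eq_zero,
    fun hS => rotationSymmetricForm_eq_zero hS⟩

theorem algebraMap_Qtr (S : Finset ℕ) (x : GaloisField 2 n) :
    algebraMap (ZMod 2) (GaloisField 2 n) (Qtr S n x)
      = rotationSymmetricForm S n (fun j => x ^ 2 ^ (j : ℕ)) := by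
  rw [Qtr, FiniteField.algebraMap_trace_eq_sum_pow, GaloisField.finrank 2 (NeZero.ne n),
    Nat.card_zmod, ← Fin.sum_univ_eq_sum_range, rotationSymmetricForm, sum_comm]
  refine sum_congr rfl fun j _ => ?_
  rw [sum_pow_char_pow]
  refine sum_congr rfl fun i _ => ?_
  calc (x ^ (2 ^ i + 1)) ^ 2 ^ (j : ℕ) = x ^ 2 ^ (j : ℕ) * x ^ 2 ^ ((j : ℕ) + i) := by
        rw [← pow_mul, ← pow_add]; ring_nf
    _ = _ := by
      rw [GaloisField.pow_prime_pow_eq_pow_prime_pow_mod 2 (NeZero.ne n) x ((j : ℕ) + i),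
        Fin.val_add, Fin.val_ofNat, Nat.add_mod_mod]

/-- A monomial exponent below `2 ^ n` under which `x ^ pairExponent (j, k) = x ^ 2 ^ j * x ^ 2 ^ k`
on `GaloisField 2 n`; on the diagonal, `x ^ 2 ^ (j + 1)` is reduced using `x ^ 2 ^ n = x`. -/
def pairExponent (p : Fin n × Fin n) : ℕ :=
  if p.1 = p.2 then 2 ^ ((p.1 + 1 : Fin n) : ℕ) else 2 ^ (p.1 : ℕ) + 2 ^ (p.2 : ℕ)

theorem pow_pairExponent (x : GaloisField 2 n) (p : Fin n × Fin n) :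
    x ^ pairExponent p = x ^ 2 ^ (p.1 : ℕ) * x ^ 2 ^ (p.2 : ℕ) := by
  unfold pairExponent
  split_ifs with h
  · rw [← h, ← pow_add, ← two_mul, ← pow_succ',
      GaloisField.pow_prime_pow_eq_pow_prime_pow_mod 2 (NeZero.ne n) x ((p.1 : ℕ) + 1),
      Fin.val_add, Fin.val_one', Nat.add_mod_mod]
  · rw [pow_add]

theorem pairExponent_lt (p : Fin n × Fin n) : pairExponent p < 2 ^ n := by
  have hlt {a : ℕ} (ha : a < n) : 2 ^ (a + 1) ≤ 2 ^ n := Nat.pow_le_pow_right two_pos ha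
  unfold pairExponent
  split_ifs with h
  · exact Nat.pow_lt_pow_right one_lt_two (Fin.is_lt _)
  · have h1 := hlt p.1.is_lt
    have h2 := hlt p.2.is_lt
    rcases Fin.lt_or_lt_of_ne h with h' | h'
    · have := Nat.pow_lt_pow_right one_lt_two h'
      rw [pow_succ] at h2; omega
    · have := Nat.pow_lt_pow_right one_lt_two h'
      rw [pow_succ] at h1; omega

theorem pairExponent_eq_one_iff (p : Fin n × Fin n) : pairExponent p = 1 ↔ p = (-1, -1) := by
  obtain ⟨j, k⟩ := p
  simp only [pairExponent, Prod.mk.injEq]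
  split_ifs with h
  · subst h
    simp [Fin.val_eq_zero_iff, add_eq_zero_iff_eq_neg]
  · have := Nat.one_le_two_pow (n := j)
    have := Nat.one_le_two_pow (n := k)
    exact ⟨fun _ => by omega, fun ⟨hj, hk⟩ => absurd (hj.trans hk.symm) h⟩

theorem pairExponent_eq_two_pow_add_one_iff {d : Fin n} (hd : d ≠ 0) (p : Fin n × Fin n) :
    pairExponent p = 2 ^ (d : ℕ) + 1 ↔ p = (0, d) ∨ p = (d, 0) := by
  have hd' : (d : ℕ) ≠ 0 := Fin.val_ne_zero_iff.mpr hd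
  obtain ⟨j, k⟩ := p
  simp only [pairExponent, Prod.mk.injEq]
  split_ifs with h
  · subst h
    simp only [Nat.two_pow_ne_two_pow_add_one hd', false_iff]
    rintro (⟨h1, h2⟩ | ⟨h1, h2⟩)
    · exact hd (h2.symm.trans h1)
    · exact hd (h1.symm.trans h2)
  · rw [Nat.two_pow_add_two_pow_eq_two_pow_add_one_iff hd', Fin.val_eq_zero_iff,
      Fin.val_eq_zero_iff, Fin.val_inj, Fin.val_inj]

theorem residueCountsPaired_of_forall_rotationSymmetricForm_frobenius_eq_zero {S : Finset ℕ}
    (h : ∀ x : GaloisField 2 n, rotationSymmetricForm S n (fun j => x ^ 2 ^ (j : ℕ)) = 0) :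
    ResidueCountsPaired S n := by
  let c (p : Fin n × Fin n) : GaloisField 2 n := residueCount S n (p.2 - p.1)
  let P : (GaloisField 2 n)[X] := ∑ p, monomial (pairExponent p) (c p)
  have hP : P = 0 := by
    refine eq_zero_of_forall_eval_zero_of_natDegree_lt_card P (fun x => ?_) ?_
    · rw [← h x, rotationSymmetricForm_eq_sum_residueCount, ← Fintype.sum_prod_type']
      simp only [P, c, eval_finsetSum, eval_monomial, pow_pairExponent, mul_assoc]
    · have hdeg : P.natDegree ≤ 2 ^ n - 1 := natDegree_sum_le_of_forall_le _ _ fun p _ =>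
        natDegree_monomial_le _ |>.trans (Nat.le_sub_one_of_lt (pairExponent_lt p))
      rw [← Nat.cast_card, GaloisField.card 2 n (NeZero.ne n)]
      exact_mod_cast hdeg.trans_lt (Nat.sub_one_lt (by positivity))
  have hcoeff (m : ℕ) : ∑ p with pairExponent p = m, c p = 0 := by
    have hm := congrArg (coeff · m) hP
    simp only [P, finsetSum_coeff, coeff_monomial, coeff_zero] at hm
    rwa [sum_filter]
  have heven {a : ℕ} (ha : (a : GaloisField 2 n) = 0) : Even a :=
    even_iff_two_dvd.mpr ((CharP.cast_eq_zero_iff _ 2 a).mp ha)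
  refine ⟨heven ?_, fun d => ?_⟩
  · have h1 := hcoeff 1
    rw [filter_congr fun p _ => pairExponent_eq_one_iff p, filter_eq', if_pos (mem_univ _),
      sum_singleton] at h1
    simpa [c] using h1
  · by_cases hd : d = 0
    · rw [hd, neg_zero]
      exact ⟨_, rfl⟩
    · have hpair : ({p | pairExponent p = 2 ^ (d : ℕ) + 1} : Finset _) = {(0, d), (d, 0)} := by
        ext p
        simp [pairExponent_eq_two_pow_add_one_iff hd]
      have h2 := hcoeff (2 ^ (d : ℕ) + 1)
      rw [hpair, sum_pair (by simp [Ne.symm hd])] at h2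
      exact heven (by simpa [c] using h2)

theorem Qtr_eq_zero_iff (S : Finset ℕ) :
    (∀ x, Qtr S n x = 0) ↔ ResidueCountsPaired S n := by
  have hQ (x : GaloisField 2 n) :
      Qtr S n x = 0 ↔ rotationSymmetricForm S n (fun j => x ^ 2 ^ (j : ℕ)) = 0 := by
    rw [← algebraMap_Qtr, map_eq_zero_iff _ (algebraMap (ZMod 2) _).injective]
  simp only [hQ]
  exact ⟨residueCountsPaired_of_forall_rotationSymmetricForm_frobenius_eq_zero,
    fun hS x => rotationSymmetricForm_eq_zero hS _⟩

theorem trace_vanishes_iff_rs_vanishes_general (S : Finset ℕ) (n : ℕ) (hn : 1 ≤ n) :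
    (∀ x : GaloisField 2 n, Qtr S n x = 0) ↔ (∀ x : Fin n → ZMod 2, rsB S n x = 0) := by
  have : NeZero n := ⟨by omega⟩
  exact (Qtr_eq_zero_iff S).trans (rsB_eq_zero_iff S).symm

/-- `Q_n` vanishes identically on `GaloisField 2 n` iff the associated rotation
symmetric Boolean function vanishes identically on `(Fin n → ZMod 2)`. -/
theorem trace_vanishes_iff_rs_vanishes (S : Finset ℕ) (hS : S.Nonempty)
    (hpos : ∀ i ∈ S, 1 ≤ i) (n : ℕ) (hn : 1 ≤ n) :
    (∀ x : GaloisField 2 n, Qtr S n x = 0) ↔ (∀ x : Fin n → ZMod 2, rsB S n x = 0) :=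
  trace_vanishes_iff_rs_vanishes_general S n hn
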